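/- Let U be a bounded open subset of EuclideanSpace ℝ (Fin 3). Then there exists a bounded open set U⁺ ⊆ EuclideanSpace ℝ (Fin 3) with U ⊆ U⁺ and with connected complement, such that U⁺ ⊆ W for every bounded open set W with connected complement satisfying U ⊆ W; that is, U is contained in a unique minimal bounded saturated open set. -/
import Mathlib

open Set Metric

/-- The set of vectors of norm `> R` in `ℝ³` is connected. -/
lemma isConnected_norm_gt (R : ℝ) (hR : 0 ≤ R) :
    IsConnected {z : EuclideanSpace ℝ (Fin 3) | R < ‖z‖} := by
  have hrank : 1 < Module.rank ℝ (EuclideanSpace ℝ (Fin 3)) := by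
    rw [← Module.finrank_eq_rank, finrank_euclideanSpace]; norm_num
  have hs : IsConnected ((sphere (0 : EuclideanSpace ℝ (Fin 3)) 1) ×ˢ (Ioi R)) :=
    (isConnected_sphere hrank 0 zero_le_one).prod (isConnected_Ioi)
  have himg : IsConnected ((fun p : (EuclideanSpace ℝ (Fin 3)) × ℝ => p.2 • p.1) ''
      ((sphere (0 : EuclideanSpace ℝ (Fin 3)) 1) ×ˢ (Ioi R))) :=
    hs.image _ (continuous_snd.smul continuous_fst).continuousOn
  convert himg using 1
  ext z
  constructor
  · intro hz
    have hz0 : z ≠ 0 := by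
      intro h; rw [h] at hz; simp at hz; linarith [hz]
    have hzn : ‖z‖ ≠ 0 := norm_ne_zero_iff.mpr hz0
    refine ⟨(‖z‖⁻¹ • z, ‖z‖), ⟨?_, hz⟩, ?_⟩
    · simp [norm_smul, abs_of_nonneg (inv_nonneg.2 (norm_nonneg z)), inv_mul_cancel₀ hzn]
    · simp [smul_smul, mul_inv_cancel₀ hzn]
  · rintro ⟨⟨u, t⟩, ⟨hu, ht⟩, rfl⟩
    have : ‖u‖ = 1 := by simpa using hu
    simp only [mem_setOf_eq, norm_smul, this, mul_one]
    calc R < t := ht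
      _ ≤ |t| := le_abs_self t

/-- Every bounded open subset `U` of `ℝ³` is contained in a unique minimal bounded
saturated open set `U⁺` (a bounded open set with connected complement contained in every
bounded open set with connected complement containing `U`). -/
theorem exists_minimal_saturated_hull
    (U : Set (EuclideanSpace ℝ (Fin 3))) (hUo : IsOpen U) (hUb : Bornology.IsBounded U) :
    ∃ Uplus : Set (EuclideanSpace ℝ (Fin 3)),
      IsOpen Uplus ∧ Bornology.IsBounded Uplus ∧ U ⊆ Uplus ∧ IsConnected Uplusᶜ ∧
      ∀ W : Set (EuclideanSpace ℝ (Fin 3)),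
        IsOpen W → Bornology.IsBounded W → IsConnected Wᶜ → U ⊆ W → Uplus ⊆ W := by
  obtain ⟨R, hR0, hRU⟩ := hUb.subset_closedBall_lt 0 0
  set S : Set (EuclideanSpace ℝ (Fin 3)) := {z | R < ‖z‖} with hS
  have hScon : IsConnected S := isConnected_norm_gt R hR0.le
  have hSU : S ⊆ Uᶜ := by
    intro z hz hzU
    have := hRU hzU
    rw [mem_closedBall, dist_zero_right] at this
    exact absurd this (not_le.mpr hz)
  obtain ⟨x, hx⟩ : S.Nonempty := hScon.nonempty
  set C : Set (EuclideanSpace ℝ (Fin 3)) := connectedComponentIn Uᶜ x with hC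
  have hxU : x ∈ Uᶜ := hSU hx
  have hCcl : IsClosed C := by
    refine isClosed_of_closure_subset ?_
    exact (isPreconnected_connectedComponentIn.closure).subset_connectedComponentIn
      (subset_closure (mem_connectedComponentIn hxU))
      (closure_minimal (connectedComponentIn_subset _ _) (isClosed_compl_iff.mpr hUo))
  have hSC : S ⊆ C := hScon.isPreconnected.subset_connectedComponentIn hx hSU
  refine ⟨Cᶜ, hCcl.isOpen_compl, ?_, ?_, ?_, ?_⟩
  · refine (Metric.isBounded_closedBall (x := (0:EuclideanSpace ℝ (Fin 3))) (r := R)).subset ?_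
    intro z hz
    by_contra h
    rw [Metric.mem_closedBall, dist_zero_right, not_le] at h
    exact hz (hSC h)
  · intro z hzU
    exact fun hzC => (connectedComponentIn_subset Uᶜ x hzC) hzU
  · rw [compl_compl]
    exact isConnected_connectedComponentIn_iff.mpr hxU
  · intro W hWo hWb hWc hUW
    rw [← compl_compl W, Set.compl_subset_compl]
    obtain ⟨R', hR'0, hRW⟩ := hWb.subset_closedBall_lt 0 0
    obtain ⟨y, hy⟩ : ({z : EuclideanSpace ℝ (Fin 3) | max R R' < ‖z‖}).Nonempty :=
      (isConnected_norm_gt _ (le_max_of_le_left hR0.le)).nonempty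
    have hyW : y ∈ Wᶜ := by
      intro hyW
      have := hRW hyW
      rw [mem_closedBall, dist_zero_right] at this
      exact absurd this (not_le.mpr (lt_of_le_of_lt (le_max_right R R') hy))
    have hyS : y ∈ S := lt_of_le_of_lt (le_max_left R R') hy
    have hWsub : Wᶜ ⊆ Uᶜ := Set.compl_subset_compl.mpr hUW
    have : Wᶜ ⊆ connectedComponentIn Uᶜ y :=
      hWc.isPreconnected.subset_connectedComponentIn hyW hWsub
    rwa [← connectedComponentIn_eq (hSC hyS)] at this
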